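/- arXiv:math/0210059 — 5 statements merged into one kernel-verified Lean document; each statement's English description precedes it below -/
import Mathlib

section
/- Let E and F be finite-dimensional real normed vector spaces. Let A : ℝ → L(E,E) and C : ℝ → L(F,F) be continuous maps, and let B : ℝ → L(E,F) be differentiable and satisfy B′(r) = C(r)∘B(r) − B(r)∘A(r) for all r ∈ ℝ. Let Sol denote the vector space of differentiable maps σ : ℝ → E such that σ′(r) = A(r)(σ(r)) for all r and B(r)(σ(r)) = 0 for all r. Then for every r₀ ∈ ℝ, the evaluation map σ ↦ σ(r₀) is a linear bijection from Sol onto ker(B(r₀)); in particular dim Sol = dim ker B(r₀). -/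
/-!
Evaluation at `r₀` lands in `ker B(r₀)`, and it is injective because solutions of the linear
equation `σ' = A σ` are unique (the field `A t` is Lipschitz with a constant that is uniform on
compact time intervals). For surjectivity, solve `σ' = A σ` with `σ r₀ = x ∈ ker B(r₀)`; by the
intertwining identity `φ r := B r (σ r)` solves `φ' = C φ` with `φ r₀ = 0`, so `φ ≡ 0` by
uniqueness again.

The global solution of `σ' = A σ` comes from Picard–Lindelöf: once `‖A‖ ≤ M`, local solutions
exist for time `1 / (2M)` from every point, and gluing them yields solutions on arbitrarily long
intervals. To get such a bound, compose `A` with the clamp onto `[t₀ - R, t₀ + R]`; the solutions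
obtained on `(t₀ - R, t₀ + R)` for all `R` agree on overlaps and fit into a global one.
-/

open Set Filter
open scoped NNReal

theorem IsCompact.exists_nnnorm_le_of_continuousOn {α G : Type*} [TopologicalSpace α]
    [SeminormedAddGroup G] {s : Set α} (hs : IsCompact s) {f : α → G} (hf : ContinuousOn f s) :
    ∃ M : ℝ≥0, ∀ x ∈ s, ‖f x‖₊ ≤ M := by
  obtain ⟨C, hC⟩ := hs.exists_bound_of_continuousOn hf
  exact ⟨C.toNNReal, fun x hx => by
    simpa only [norm_toNNReal] using Real.toNNReal_le_toNNReal (hC x hx)⟩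

section LinearODE

variable {E : Type*} [NormedAddCommGroup E] [NormedSpace ℝ E] {A : ℝ → E →L[ℝ] E} {f g : ℝ → E}

theorem linearODE_eqOn_Ioo (hA : Continuous A) {a b t₀ : ℝ} (ht₀ : t₀ ∈ Ioo a b)
    (hf : ∀ t ∈ Ioo a b, HasDerivAt f (A t (f t)) t)
    (hg : ∀ t ∈ Ioo a b, HasDerivAt g (A t (g t)) t) (heq : f t₀ = g t₀) :
    EqOn f g (Ioo a b) := by
  obtain ⟨M, hM⟩ := isCompact_Icc.exists_nnnorm_le_of_continuousOn (hA.continuousOn (s := Icc a b))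
  exact ODE_solution_unique_of_mem_Ioo (s := fun _ => univ)
    (fun t ht => ((A t).lipschitz.weaken (hM t (Ioo_subset_Icc_self ht))).lipschitzOnWith) ht₀
    (fun t ht => ⟨hf t ht, mem_univ _⟩) (fun t ht => ⟨hg t ht, mem_univ _⟩) heq

theorem linearODE_unique (hA : Continuous A) {t₀ : ℝ} (hf : ∀ t, HasDerivAt f (A t (f t)) t)
    (hg : ∀ t, HasDerivAt g (A t (g t)) t) (heq : f t₀ = g t₀) : f = g := by
  funext t
  have ht : |t| < |t| + |t₀| + 1 := by linarith [abs_nonneg t₀]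
  have ht₀ : |t₀| < |t| + |t₀| + 1 := by linarith [abs_nonneg t]
  exact linearODE_eqOn_Ioo hA (abs_lt.mp ht₀) (fun s _ => hf s) (fun s _ => hg s) heq
    (abs_lt.mp ht)

theorem linearODE_exists_Ioo_of_nnnorm_le [CompleteSpace E] (hA : Continuous A) {c ε : ℝ}
    {M : ℝ≥0} (hε : 0 ≤ ε) (hM : ∀ t ∈ Icc (c - ε) (c + ε), ‖A t‖₊ ≤ M) (hMε : 2 * M * ε ≤ 1)
    (x : E) : ∃ f : ℝ → E, f c = x ∧ ∀ t ∈ Ioo (c - ε) (c + ε), HasDerivAt f (A t (f t)) t := by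
  have hc : c ∈ Icc (c - ε) (c + ε) := ⟨by linarith, by linarith⟩
  -- On the ball of radius `‖x‖` around `x` the field `A t` is bounded by `2 M ‖x‖`,
  -- so a solution cannot leave that ball before time `1 / (2 M)`.
  have hPL : IsPicardLindelof (fun t => A t) (⟨c, hc⟩ : Icc (c - ε) (c + ε)) x ‖x‖₊ 0
      (2 * M * ‖x‖₊) M := by
    refine ⟨fun t ht => ((A t).lipschitz.weaken (hM t ht)).lipschitzOnWith,
      fun y _ => (hA.clm_apply continuous_const).continuousOn, fun t ht y hy => ?_, ?_⟩
    · have hy : ‖y‖ ≤ 2 * ‖x‖ := by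
        have := norm_le_norm_add_norm_sub' y x
        rw [mem_closedBall_iff_norm] at hy
        push_cast at hy
        linarith
      calc ‖A t y‖ ≤ ‖A t‖ * ‖y‖ := (A t).le_opNorm y
        _ ≤ M * (2 * ‖x‖) := mul_le_mul (hM t ht) hy (norm_nonneg _) M.2
        _ = _ := by push_cast; ring
    · simp only [add_sub_cancel_left, sub_sub_cancel, max_self, NNReal.coe_zero, sub_zero]
      push_cast
      nlinarith [norm_nonneg x]
  obtain ⟨f, hf₀, hf⟩ := hPL.exists_eq_forall_mem_Icc_hasDerivWithinAt₀
  exact ⟨f, hf₀, fun t ht => (hf t (Ioo_subset_Icc_self ht)).hasDerivAt (Icc_mem_nhds ht.1 ht.2)⟩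

theorem linearODE_hasDerivAt_piecewise (hA : Continuous A) {a b a' b' c : ℝ}
    (hf : ∀ t ∈ Ioo a b, HasDerivAt f (A t (f t)) t)
    (hg : ∀ t ∈ Ioo a' b', HasDerivAt g (A t (g t)) t) (hc : c ∈ Ioo a b ∩ Ioo a' b')
    (hfg : f c = g c) :
    ∀ t ∈ Ioo a b ∪ Ioo a' b',
      HasDerivAt ((Ioo a b).piecewise f g) (A t ((Ioo a b).piecewise f g t)) t := by
  set u := (Ioo a b).piecewise f g
  have hsub : Ioo (max a a') (min b b') ⊆ Ioo a b ∩ Ioo a' b' := fun s hs =>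
    ⟨⟨(le_max_left _ _).trans_lt hs.1, hs.2.trans_le (min_le_left _ _)⟩,
      ⟨(le_max_right _ _).trans_lt hs.1, hs.2.trans_le (min_le_right _ _)⟩⟩
  have hfg' : EqOn f g (Ioo (max a a') (min b b')) :=
    linearODE_eqOn_Ioo hA ⟨max_lt hc.1.1 hc.2.1, lt_min hc.1.2 hc.2.2⟩
      (fun t ht => hf t (hsub ht).1) (fun t ht => hg t (hsub ht).2) hfg
  have hug : EqOn u g (Ioo a' b') := by
    intro s hs
    by_cases hs' : s ∈ Ioo a b
    · exact (piecewise_eq_of_mem _ _ _ hs').trans (hfg' ⟨max_lt hs'.1 hs.1, lt_min hs'.2 hs.2⟩)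
    · exact piecewise_eq_of_notMem _ _ _ hs'
  have transfer : ∀ {v : ℝ → E} {U : Set ℝ}, IsOpen U → EqOn u v U →
      (∀ t ∈ U, HasDerivAt v (A t (v t)) t) → ∀ t ∈ U, HasDerivAt u (A t (u t)) t :=
    fun hU huv hv t ht => huv ht ▸ (hv t ht).congr_of_eventuallyEq
      (eventually_of_mem (hU.mem_nhds ht) huv)
  rintro t (ht | ht)
  · exact transfer isOpen_Ioo (piecewise_eqOn _ _ _) hf t ht
  · exact transfer isOpen_Ioo hug hg t ht

theorem linearODE_exists_extend_Ioo (hA : Continuous A) {a b δ : ℝ} (hδ : 0 < δ)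
    (hab : a + δ < b)
    (hloc : ∀ (c : ℝ) (x : E), ∃ g : ℝ → E, g c = x ∧
      ∀ t ∈ Ioo (c - 2 * δ) (c + 2 * δ), HasDerivAt g (A t (g t)) t)
    (hf : ∀ t ∈ Ioo a b, HasDerivAt f (A t (f t)) t) :
    ∃ f' : ℝ → E, EqOn f' f (Ioo a b) ∧
      ∀ t ∈ Ioo (a - δ) (b + δ), HasDerivAt f' (A t (f' t)) t := by
  obtain ⟨g, hg₀, hg⟩ := hloc (b - δ) (f (b - δ))
  have hfg := linearODE_hasDerivAt_piecewise hA hf hg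
    ⟨⟨by linarith, by linarith⟩, ⟨by linarith, by linarith⟩⟩ hg₀.symm
  set u := (Ioo a b).piecewise f g
  have hu : ∀ t ∈ Ioo a (b + δ), HasDerivAt u (A t (u t)) t := by
    intro t ht
    refine hfg t ?_
    by_cases htb : t < b
    · exact Or.inl ⟨ht.1, htb⟩
    · exact Or.inr ⟨by linarith, by linarith [ht.2]⟩
  obtain ⟨g', hg'₀, hg'⟩ := hloc (a + δ) (u (a + δ))
  have hug' := linearODE_hasDerivAt_piecewise hA hu hg'
    ⟨⟨by linarith, by linarith⟩, ⟨by linarith, by linarith⟩⟩ hg'₀.symm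
  refine ⟨(Ioo a (b + δ)).piecewise u g', fun t ht => ?_, fun t ht => hug' t ?_⟩
  · have ht' : t ∈ Ioo a (b + δ) := ⟨ht.1, by linarith [ht.2]⟩
    rw [piecewise_eq_of_mem _ _ _ ht']
    exact piecewise_eq_of_mem _ _ _ ht
  · by_cases hat : a < t
    · exact Or.inl ⟨hat, ht.2⟩
    · exact Or.inr ⟨by linarith [ht.1], by linarith⟩

theorem linearODE_exists_Ioo_of_forall_nnnorm_le [CompleteSpace E] (hA : Continuous A)
    {M : ℝ≥0} (hM : ∀ t, ‖A t‖₊ ≤ M) (t₀ : ℝ) (x : E) (R : ℝ) :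
    ∃ f : ℝ → E, f t₀ = x ∧ ∀ t ∈ Ioo (t₀ - R) (t₀ + R), HasDerivAt f (A t (f t)) t := by
  set δ : ℝ := 1 / (4 * (M + 1))
  have hδ : 0 < δ := by positivity
  have hMδ : 2 * M * (2 * δ) ≤ 1 := by
    have : 2 * (M : ℝ) * (2 * δ) = M / (M + 1) := by simp only [δ]; field_simp; ring
    rw [this, div_le_one (by positivity)]
    linarith
  have hloc : ∀ (c : ℝ) (y : E), ∃ g : ℝ → E, g c = y ∧
      ∀ t ∈ Ioo (c - 2 * δ) (c + 2 * δ), HasDerivAt g (A t (g t)) t := fun c y =>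
    linearODE_exists_Ioo_of_nnnorm_le hA (by positivity) (fun t _ => hM t) hMδ y
  have hsteps : ∀ n : ℕ, ∃ f : ℝ → E, f t₀ = x ∧
      ∀ t ∈ Ioo (t₀ - (n + 1) * δ) (t₀ + (n + 1) * δ), HasDerivAt f (A t (f t)) t := by
    intro n
    induction n with
    | zero =>
      obtain ⟨f, hf₀, hf⟩ := hloc t₀ x
      refine ⟨f, hf₀, fun t ht => hf t ?_⟩
      push_cast at ht
      exact ⟨by linarith [ht.1], by linarith [ht.2]⟩
    | succ n ih =>
      obtain ⟨f, hf₀, hf⟩ := ih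
      obtain ⟨f', hf'f, hf'⟩ := linearODE_exists_extend_Ioo hA hδ
        (by nlinarith [(n.cast_nonneg : (0 : ℝ) ≤ n)]) hloc hf
      refine ⟨f', (hf'f ⟨by nlinarith, by nlinarith⟩).trans hf₀, fun t ht => hf' t ?_⟩
      push_cast at ht
      exact ⟨by linarith [ht.1], by linarith [ht.2]⟩
  obtain ⟨n, hn⟩ := exists_nat_ge (R / δ)
  obtain ⟨f, hf₀, hf⟩ := hsteps n
  have hR : R ≤ (n + 1) * δ := by
    rw [div_le_iff₀ hδ] at hn
    linarith
  exact ⟨f, hf₀, fun t ht => hf t ⟨by linarith [ht.1], by linarith [ht.2]⟩⟩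

theorem linearODE_exists_Ioo [CompleteSpace E] (hA : Continuous A) (t₀ : ℝ) (x : E) (R : ℝ) :
    ∃ f : ℝ → E, f t₀ = x ∧ ∀ t ∈ Ioo (t₀ - R) (t₀ + R), HasDerivAt f (A t (f t)) t := by
  set clamp : ℝ → ℝ := fun t => max (t₀ - R) (min t (t₀ + R))
  have hclamp : ∀ t ∈ Ioo (t₀ - R) (t₀ + R), clamp t = t := fun t ht => by
    simp only [clamp, min_eq_left ht.2.le, max_eq_right ht.1.le]
  obtain ⟨M, hM⟩ := (isCompact_Icc (a := t₀ - R) (b := max (t₀ - R) (t₀ + R)))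
    |>.exists_nnnorm_le_of_continuousOn hA.continuousOn
  obtain ⟨f, hf₀, hf⟩ := linearODE_exists_Ioo_of_forall_nnnorm_le (A := A ∘ clamp)
    (hA.comp (by fun_prop)) (fun t => hM _ ⟨le_max_left _ _, max_le_max le_rfl (min_le_right _ _)⟩)
    t₀ x R
  exact ⟨f, hf₀, fun t ht => by simpa [hclamp t ht] using hf t ht⟩

theorem linearODE_exists [CompleteSpace E] (hA : Continuous A) (t₀ : ℝ) (x : E) :
    ∃ f : ℝ → E, f t₀ = x ∧ ∀ t, HasDerivAt f (A t (f t)) t := by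
  choose γ hγ₀ hγ using linearODE_exists_Ioo hA t₀ x
  have hmono : ∀ {R R'}, 0 < R → R ≤ R' → EqOn (γ R) (γ R') (Ioo (t₀ - R) (t₀ + R)) :=
    fun hR hRR' => linearODE_eqOn_Ioo hA ⟨by linarith, by linarith⟩ (hγ _)
      (fun t ht => hγ _ t ⟨by linarith [ht.1], by linarith [ht.2]⟩) ((hγ₀ _).trans (hγ₀ _).symm)
  have hmem : ∀ s, s ∈ Ioo (t₀ - (|s - t₀| + 1)) (t₀ + (|s - t₀| + 1)) := fun s => by
    constructor <;> cases abs_cases (s - t₀) <;> linarith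
  refine ⟨fun t => γ (|t - t₀| + 1) t, hγ₀ _, fun t => ?_⟩
  refine (hγ _ t (hmem t)).congr_of_eventuallyEq ?_
  filter_upwards [isOpen_Ioo.mem_nhds (hmem t)] with s hs
  rcases le_total (|s - t₀| + 1) (|t - t₀| + 1) with h | h
  · exact hmono (by positivity) h (hmem s)
  · exact (hmono (by positivity) h hs).symm

end LinearODE

theorem apply_eq_zero_of_hasDerivAt_eq_comp_sub_comp {E F : Type*} [NormedAddCommGroup E]
    [NormedSpace ℝ E] [NormedAddCommGroup F] [NormedSpace ℝ F] {A : ℝ → E →L[ℝ] E}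
    {C : ℝ → F →L[ℝ] F} {B : ℝ → E →L[ℝ] F} {σ : ℝ → E} (hC : Continuous C)
    (hB : ∀ r : ℝ, HasDerivAt B (C r ∘L B r - B r ∘L A r) r)
    (hσ : ∀ r, HasDerivAt σ (A r (σ r)) r) {r₀ : ℝ} (h₀ : B r₀ (σ r₀) = 0) (r : ℝ) :
    B r (σ r) = 0 := by
  have hBσ : ∀ r, HasDerivAt (fun r => B r (σ r)) (C r (B r (σ r))) r := fun r => by
    simpa using (hB r).clm_apply (hσ r)
  have h0 : ∀ r, HasDerivAt (fun _ => (0 : F)) (C r 0) r := fun r => by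
    simpa using hasDerivAt_const r (0 : F)
  exact congrFun (linearODE_unique hC hBσ h0 h₀) r

theorem eval_bijOn_solutions_general {E F : Type*}
    [NormedAddCommGroup E] [NormedSpace ℝ E] [FiniteDimensional ℝ E]
    [NormedAddCommGroup F] [NormedSpace ℝ F]
    (A : ℝ → E →L[ℝ] E) (C : ℝ → F →L[ℝ] F) (B : ℝ → E →L[ℝ] F)
    (hA : Continuous A) (hC : Continuous C)
    (hB : ∀ r : ℝ, HasDerivAt B (C r ∘L B r - B r ∘L A r) r)
    (r₀ : ℝ) :
    Set.BijOn (fun σ : ℝ → E => σ r₀)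
      {σ : ℝ → E | (∀ r : ℝ, HasDerivAt σ (A r (σ r)) r) ∧ ∀ r : ℝ, B r (σ r) = 0}
      (LinearMap.ker (B r₀ : E →ₗ[ℝ] F) : Set E) := by
  refine ⟨fun σ hσ => hσ.2 r₀, fun σ hσ τ hτ h => linearODE_unique hA hσ.1 hτ.1 h, fun x hx => ?_⟩
  obtain ⟨σ, hσ₀, hσ⟩ := linearODE_exists hA r₀ x
  have h₀ : B r₀ (σ r₀) = 0 := hσ₀ ▸ hx
  exact ⟨σ, ⟨hσ, apply_eq_zero_of_hasDerivAt_eq_comp_sub_comp hC hB hσ h₀⟩, hσ₀⟩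

/-- Dimension-counting principle of the paper's Lemma 1.4: under the intertwining identity
`B′(r) = C(r)∘B(r) − B(r)∘A(r)`, the space `Sol` of solutions of the first-order linear
system `σ′ = A σ` subject to the algebraic constraint `Bσ = 0` is mapped bijectively, by
the (linear) evaluation map `σ ↦ σ(r₀)`, onto the kernel of `B(r₀)`; in particular
`dim Sol = dim ker B(r₀)`. -/
theorem eval_bijOn_solutions {E F : Type*}
    [NormedAddCommGroup E] [NormedSpace ℝ E] [FiniteDimensional ℝ E]
    [NormedAddCommGroup F] [NormedSpace ℝ F] [FiniteDimensional ℝ F]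
    (A : ℝ → E →L[ℝ] E) (C : ℝ → F →L[ℝ] F) (B : ℝ → E →L[ℝ] F)
    (hA : Continuous A) (hC : Continuous C)
    (hB : ∀ r : ℝ, HasDerivAt B (C r ∘L B r - B r ∘L A r) r)
    (r₀ : ℝ) :
    Set.BijOn (fun σ : ℝ → E => σ r₀)
      {σ : ℝ → E | (∀ r : ℝ, HasDerivAt σ (A r (σ r)) r) ∧ ∀ r : ℝ, B r (σ r) = 0}
      (LinearMap.ker (B r₀ : E →ₗ[ℝ] F) : Set E) :=
  eval_bijOn_solutions_general A C B hA hC hB r₀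
end

section
/- Let δ ∈ (0,1). There exists a constant c > 0, depending only on δ, such that for every R ≥ 0 and every continuously differentiable function f : [R,∞) → ℝ with ∫_R^∞ f(r)² e^{2(δ−1)r} dr < ∞ and ∫_R^∞ f′(r)² e^{2δr} dr < ∞, the limit f_∞ = lim_{r→∞} f(r) exists and satisfies |f_∞|² ≤ c·( e^{2(1−δ)R} ∫_R^∞ f(r)² e^{2(δ−1)r} dr + e^{−2δR} ∫_R^∞ f′(r)² e^{2δr} dr ). -/
/-!
Write `f_∞ - f r = ∫_r^∞ f'`. By Cauchy–Schwarz against the weight `e^{2δs}`,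
`(∫_r^∞ |f'|)² ≤ e^{-2δr}/(2δ) · ∫_R^∞ f'² e^{2δs}`, so `f'` is integrable, `f_∞` exists and
`|f_∞ - f r|²` is controlled by the second integral for every `r ≥ R`. On `(R, R + 1]` the weight
`e^{2(δ-1)r}` is comparable to `e^{2(δ-1)R}`, so averaging `f_∞² ≤ 2 f(r)² + 2 (f_∞ - f r)²` over
that unit interval brings in the first integral.
-/

open MeasureTheory Filter Set

theorem sq_integral_mul_le_integral_sq_mul_integral_sq {α : Type*} [MeasurableSpace α]
    {μ : Measure α} {u v : α → ℝ} (hu0 : 0 ≤ᵐ[μ] u) (hv0 : 0 ≤ᵐ[μ] v)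
    (hu : MemLp u 2 μ) (hv : MemLp v 2 μ) :
    (∫ a, u a * v a ∂μ) ^ 2 ≤ (∫ a, u a ^ 2 ∂μ) * ∫ a, v a ^ 2 ∂μ := by
  have holder := integral_mul_le_Lp_mul_Lq_of_nonneg Real.HolderConjugate.two_two hu0 hv0
    (by simpa using hu) (by simpa using hv)
  simp only [Real.rpow_two, ← Real.sqrt_eq_rpow] at holder
  have huv : 0 ≤ ∫ a, u a * v a ∂μ :=
    integral_nonneg_of_ae (by filter_upwards [hu0, hv0] with a ha hb using mul_nonneg ha hb)
  calc (∫ a, u a * v a ∂μ) ^ 2 ≤ (√(∫ a, u a ^ 2 ∂μ) * √(∫ a, v a ^ 2 ∂μ)) ^ 2 := by gcongr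
    _ = _ := by
      rw [mul_pow, Real.sq_sqrt (integral_nonneg fun _ => sq_nonneg _),
        Real.sq_sqrt (integral_nonneg fun _ => sq_nonneg _)]

theorem integrableOn_Ioi_and_sq_integral_abs_le_of_sq_mul_exp {g : ℝ → ℝ} {w r : ℝ}
    (hw : 0 < w) (hmeas : AEStronglyMeasurable g (volume.restrict (Ioi r)))
    (hg : IntegrableOn (fun s => g s ^ 2 * Real.exp (w * s)) (Ioi r)) :
    IntegrableOn g (Ioi r) ∧
      (∫ s in Ioi r, |g s|) ^ 2 ≤
        (∫ s in Ioi r, g s ^ 2 * Real.exp (w * s)) * (Real.exp (-w * r) / w) := by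
  set u : ℝ → ℝ := fun s => |g s| * Real.exp (w / 2 * s)
  set v : ℝ → ℝ := fun s => Real.exp (-(w / 2) * s)
  have exp_sq : ∀ a s : ℝ, Real.exp (a / 2 * s) ^ 2 = Real.exp (a * s) := fun a s => by
    rw [sq, ← Real.exp_add]; ring_nf
  have hu_sq : ∀ s, u s ^ 2 = g s ^ 2 * Real.exp (w * s) := fun s => by
    simp only [u, mul_pow, sq_abs, exp_sq]
  have hv_sq : ∀ s, v s ^ 2 = Real.exp (-w * s) := fun s => by
    simp only [v, ← neg_div, exp_sq]
  have huv : ∀ s, u s * v s = |g s| := fun s => by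
    simp only [u, v, mul_assoc, ← Real.exp_add]; ring_nf; simp
  have hu : MemLp u 2 (volume.restrict (Ioi r)) := by
    refine (memLp_two_iff_integrable_sq ?_).2 (by simp only [hu_sq]; exact hg)
    exact hmeas.norm.mul (by fun_prop : Continuous _).aestronglyMeasurable
  have hv : MemLp v 2 (volume.restrict (Ioi r)) := by
    refine (memLp_two_iff_integrable_sq (by fun_prop : Continuous v).aestronglyMeasurable).2 ?_
    simp only [hv_sq]; exact exp_neg_integrableOn_Ioi r hw
  have hu0 : 0 ≤ᵐ[volume.restrict (Ioi r)] u := ae_of_all _ fun s => by positivity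
  have hv0 : 0 ≤ᵐ[volume.restrict (Ioi r)] v := ae_of_all _ fun s => by positivity
  refine ⟨(integrable_norm_iff hmeas).1 ?_, ?_⟩
  · exact (hu.integrable_mul hv).congr (ae_of_all _ fun s => huv s)
  · have cs := sq_integral_mul_le_integral_sq_mul_integral_sq hu0 hv0 hu hv
    simp only [huv, hu_sq, hv_sq] at cs
    rwa [integral_exp_mul_Ioi (by linarith), neg_div_neg_eq] at cs

theorem exists_tendsto_atTop_and_integral_Ioi_eq_sub {E : Type*} [NormedAddCommGroup E]
    [NormedSpace ℝ E] [CompleteSpace E] {f f' : ℝ → E} {R : ℝ}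
    (hderiv : ∀ r ∈ Ici R, HasDerivAt f (f' r) r) (hint : IntegrableOn f' (Ioi R)) :
    ∃ L, Tendsto f atTop (nhds L) ∧ ∀ r ∈ Ici R, ∫ s in Ioi r, f' s = L - f r := by
  have hL := tendsto_limUnder_of_hasDerivAt_of_integrableOn_Ioi
    (fun x hx => hderiv x (mem_Ici_of_Ioi hx)) hint
  refine ⟨_, hL, fun r hr => ?_⟩
  exact integral_Ioi_of_hasDerivAt_of_tendsto' (fun x hx => hderiv x (mem_Ici.2 (le_trans hr hx)))
    (hint.mono_set (Ioi_subset_Ioi hr)) hL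

theorem exists_tendsto_atTop_and_sq_sub_le_of_deriv_sq_mul_exp {f f' : ℝ → ℝ} {w R : ℝ}
    (hw : 0 < w) (hderiv : ∀ r ∈ Ici R, HasDerivAt f (f' r) r)
    (hcont : ContinuousOn f' (Ici R))
    (hB : IntegrableOn (fun s => f' s ^ 2 * Real.exp (w * s)) (Ioi R)) :
    ∃ L, Tendsto f atTop (nhds L) ∧ ∀ r ∈ Ici R,
      (L - f r) ^ 2 ≤ (∫ s in Ioi R, f' s ^ 2 * Real.exp (w * s)) * (Real.exp (-w * r) / w) := by
  have tail : ∀ r ∈ Ici R, IntegrableOn f' (Ioi r) ∧ (∫ s in Ioi r, |f' s|) ^ 2 ≤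
      (∫ s in Ioi r, f' s ^ 2 * Real.exp (w * s)) * (Real.exp (-w * r) / w) :=
    fun r hr => integrableOn_Ioi_and_sq_integral_abs_le_of_sq_mul_exp hw
      ((hcont.mono (Ioi_subset_Ici hr)).aestronglyMeasurable measurableSet_Ioi)
      (hB.mono_set (Ioi_subset_Ioi hr))
  obtain ⟨L, hL, hLf⟩ := exists_tendsto_atTop_and_integral_Ioi_eq_sub hderiv (tail R self_mem_Ici).1
  refine ⟨L, hL, fun r hr => ?_⟩
  have htail_le : ∫ s in Ioi r, f' s ^ 2 * Real.exp (w * s) ≤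
      ∫ s in Ioi R, f' s ^ 2 * Real.exp (w * s) :=
    setIntegral_mono_set hB (ae_of_all _ fun s => by positivity) (ae_of_all _ (Ioi_subset_Ioi hr))
  calc (L - f r) ^ 2 = |∫ s in Ioi r, f' s| ^ 2 := by rw [sq_abs, hLf r hr]
    _ ≤ (∫ s in Ioi r, |f' s|) ^ 2 := by gcongr; exact abs_integral_le_integral_abs
    _ ≤ _ := (tail r hr).2
    _ ≤ _ := by gcongr

theorem le_setIntegral_Ioi_of_le_on_Ioc {g : ℝ → ℝ} {c R : ℝ} (hg : IntegrableOn g (Ioi R))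
    (hg0 : ∀ r ∈ Ioi R, 0 ≤ g r) (hle : ∀ r ∈ Ioc R (R + 1), c ≤ g r) :
    c ≤ ∫ r in Ioi R, g r := by
  calc c = c * volume.real (Ioc R (R + 1)) := by simp [measureReal_def]
    _ ≤ ∫ r in Ioc R (R + 1), g r :=
      setIntegral_ge_of_const_le_real measurableSet_Ioc measure_Ioc_lt_top.ne hle
        (hg.mono_set Ioc_subset_Ioi_self)
    _ ≤ ∫ r in Ioi R, g r :=
      setIntegral_mono_set hg ((ae_restrict_iff' measurableSet_Ioi).2 (ae_of_all _ hg0))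
        (ae_of_all _ Ioc_subset_Ioi_self)

/-- Boundary-value estimate of the paper's Lemma 2.4: for `0 < δ < 1` there is a constant
`c = c(δ) > 0` such that any `C¹` function `f` on `[R,∞)` (`R ≥ 0`) with
`∫ f² e^{2(δ−1)r} < ∞` and `∫ f′² e^{2δr} < ∞` has a limit `f_∞` at infinity with
`|f_∞|² ≤ c (e^{2(1−δ)R} ∫ f² e^{2(δ−1)r} + e^{−2δR} ∫ f′² e^{2δr})`. -/
theorem boundary_value_estimate (δ : ℝ) (hδ : δ ∈ Set.Ioo (0 : ℝ) 1) :
    ∃ c : ℝ, 0 < c ∧ ∀ R : ℝ, 0 ≤ R → ∀ f f' : ℝ → ℝ,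
      (∀ r ∈ Set.Ici R, HasDerivAt f (f' r) r) →
      ContinuousOn f' (Set.Ici R) →
      IntegrableOn (fun r => f r ^ 2 * Real.exp (2 * (δ - 1) * r)) (Set.Ioi R) →
      IntegrableOn (fun r => f' r ^ 2 * Real.exp (2 * δ * r)) (Set.Ioi R) →
      ∃ finf : ℝ, Tendsto f atTop (nhds finf) ∧
        finf ^ 2 ≤ c *
          (Real.exp (2 * (1 - δ) * R) *
              (∫ r in Set.Ioi R, f r ^ 2 * Real.exp (2 * (δ - 1) * r)) +
            Real.exp (-2 * δ * R) *
              (∫ r in Set.Ioi R, f' r ^ 2 * Real.exp (2 * δ * r))) := by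
  obtain ⟨hδ0, hδ1⟩ := hδ
  refine ⟨2 * Real.exp (2 * (1 - δ)) + 1 / δ, by positivity, ?_⟩
  intro R _ f f' hderiv hcont hA hB
  set A := ∫ r in Ioi R, f r ^ 2 * Real.exp (2 * (δ - 1) * r)
  set B := ∫ r in Ioi R, f' r ^ 2 * Real.exp (2 * δ * r)
  have hB0 : 0 ≤ B := setIntegral_nonneg measurableSet_Ioi fun r _ => by positivity
  obtain ⟨L, hL, hdist⟩ :=
    exists_tendsto_atTop_and_sq_sub_le_of_deriv_sq_mul_exp (by positivity) hderiv hcont hB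
  refine ⟨L, hL, ?_⟩
  have hpointwise : ∀ r ∈ Ioc R (R + 1), L ^ 2 - B * Real.exp (-2 * δ * R) / δ ≤
      2 * Real.exp (2 * (1 - δ) * (R + 1)) * (f r ^ 2 * Real.exp (2 * (δ - 1) * r)) := by
    intro r hr
    have hweight : 1 ≤ Real.exp (2 * (1 - δ) * (R + 1)) * Real.exp (2 * (δ - 1) * r) := by
      rw [← Real.exp_add]; exact Real.one_le_exp (by nlinarith [hr.2])
    have hsplit : L ^ 2 ≤ 2 * (f r ^ 2 + (L - f r) ^ 2) := by
      simpa using add_sq_le (a := f r) (b := L - f r)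
    have hfar : 2 * (L - f r) ^ 2 ≤ B * Real.exp (-2 * δ * R) / δ := by
      have hexp : Real.exp (-(2 * δ) * r) ≤ Real.exp (-2 * δ * R) :=
        Real.exp_le_exp.2 (by nlinarith [hr.1])
      calc 2 * (L - f r) ^ 2 ≤ 2 * (B * (Real.exp (-2 * δ * R) / (2 * δ))) := by
            gcongr; exact (hdist r (mem_Ici.2 hr.1.le)).trans (by gcongr)
        _ = B * Real.exp (-2 * δ * R) / δ := by field_simp
    have hnear := le_mul_of_one_le_right (sq_nonneg (f r)) hweight
    linear_combination hsplit + hfar + 2 * hnear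
  have hL2 := le_setIntegral_Ioi_of_le_on_Ioc (hA.const_mul _) (fun r _ => by positivity) hpointwise
  rw [integral_const_mul, show 2 * (1 - δ) * (R + 1) = 2 * (1 - δ) + 2 * (1 - δ) * R by ring,
    Real.exp_add] at hL2
  have hA0 : 0 ≤ A := setIntegral_nonneg measurableSet_Ioi fun r _ => by positivity
  have hX : 0 ≤ Real.exp (2 * (1 - δ) * R) * A / δ := by positivity
  have hY : 0 ≤ 2 * Real.exp (2 * (1 - δ)) * (Real.exp (-2 * δ * R) * B) := by positivity
  linear_combination hL2 + hX + hY
end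

section
/- For every natural number j and every δ ∈ (0,1) there exists a constant c > 0 such that for all λ > 0: ∫₀^∞ ( e^{−λe^{−r}} − Σ_{m=0}^{j} (−λe^{−r})^m / m! )² e^{2(j+δ)r} dr ≤ c · λ^{2(j+δ)}. -/
open MeasureTheory Real Finset

private lemma aux_int_exp_neg_Ioi {b : ℝ} (hb : 0 < b) (a : ℝ) :
    ∫ x in Set.Ioi a, Real.exp (-(b * x)) = Real.exp (-(b * a)) / b := by
  have h := MeasureTheory.integral_comp_mul_left_Ioi (fun y => Real.exp (-y)) a hb
  simp only [smul_eq_mul] at h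
  rw [h, integral_exp_neg_Ioi]
  field_simp

private lemma aux_int_exp_Ioc {b : ℝ} (hb : 0 < b) {a : ℝ} (ha : 0 ≤ a) :
    ∫ x in Set.Ioc 0 a, Real.exp (b * x) = (Real.exp (b * a) - 1) / b := by
  rw [← intervalIntegral.integral_of_le ha]
  have h := intervalIntegral.integral_comp_mul_left (a := (0:ℝ)) (b := a)
    (fun y => Real.exp y) hb.ne'
  simp only [smul_eq_mul] at h
  rw [h, integral_exp, mul_zero, Real.exp_zero]
  field_simp

private lemma rem_small (j : ℕ) {t : ℝ} (h0 : 0 ≤ t) (h1 : t ≤ 1) :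
    |Real.exp (-t) - ∑ m ∈ Finset.range (j + 1), (-t) ^ m / (Nat.factorial m)|
      ≤ ((j : ℝ) + 2) * t ^ (j + 1) := by
  have habs : |(-t : ℝ)| ≤ 1 := by rwa [abs_neg, abs_of_nonneg h0]
  have h := Real.exp_bound habs (n := j + 1) (Nat.succ_pos j)
  rw [abs_neg, abs_of_nonneg h0] at h
  refine h.trans ?_
  have hfac : (1 : ℝ) ≤ ((j + 1).factorial : ℝ) * ((j : ℝ) + 1) := by
    have h1 : (1 : ℝ) ≤ ((j + 1).factorial : ℝ) := by
      exact_mod_cast Nat.one_le_iff_ne_zero.mpr (Nat.factorial_ne_zero _)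
    have h2 : (1 : ℝ) ≤ (j : ℝ) + 1 := by
      have : (0:ℝ) ≤ (j : ℝ) := Nat.cast_nonneg j
      linarith
    nlinarith
  have key : ((j + 1 : ℕ).succ : ℝ) / (((j + 1).factorial : ℝ) * ((j + 1 : ℕ) : ℝ))
      ≤ (j : ℝ) + 2 := by
    push_cast
    rw [div_le_iff₀ (by nlinarith)]
    nlinarith
  have ht : (0:ℝ) ≤ t ^ (j+1) := by positivity
  calc t ^ (j+1) * (((j + 1 : ℕ).succ : ℝ) / (((j + 1).factorial : ℝ) * ((j + 1 : ℕ) : ℝ)))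
      ≤ t ^ (j+1) * ((j : ℝ) + 2) := by
        exact mul_le_mul_of_nonneg_left key ht
    _ = ((j : ℝ) + 2) * t ^ (j+1) := by ring

private lemma rem_large (j : ℕ) {t : ℝ} (h1 : 1 ≤ t) :
    |Real.exp (-t) - ∑ m ∈ Finset.range (j + 1), (-t) ^ m / (Nat.factorial m)|
      ≤ ((j : ℝ) + 2) * t ^ j := by
  have h0 : (0:ℝ) ≤ t := le_trans zero_le_one h1
  have htj : (1:ℝ) ≤ t ^ j := one_le_pow₀ h1
  have hsum : |∑ m ∈ Finset.range (j + 1), (-t) ^ m / (Nat.factorial m)|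
      ≤ ((j : ℝ) + 1) * t ^ j := by
    calc |∑ m ∈ Finset.range (j + 1), (-t) ^ m / (Nat.factorial m)|
        ≤ ∑ m ∈ Finset.range (j + 1), |(-t) ^ m / (Nat.factorial m)| :=
          Finset.abs_sum_le_sum_abs _ _
      _ ≤ ∑ m ∈ Finset.range (j + 1), t ^ j := by
          refine Finset.sum_le_sum fun m hm => ?_
          rw [Finset.mem_range, Nat.lt_succ_iff] at hm
          rw [abs_div, abs_pow, abs_neg, abs_of_nonneg h0, abs_of_nonneg (by positivity)]
          have hfac : (1 : ℝ) ≤ (Nat.factorial m : ℝ) := by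
            exact_mod_cast Nat.one_le_iff_ne_zero.mpr (Nat.factorial_ne_zero _)
          have : t ^ m ≤ t ^ j := pow_le_pow_right₀ h1 hm
          calc t ^ m / (Nat.factorial m : ℝ) ≤ t ^ m / 1 := by
                exact div_le_div_of_nonneg_left (by positivity) one_pos hfac
            _ = t ^ m := div_one _
            _ ≤ t ^ j := this
      _ = ((j : ℝ) + 1) * t ^ j := by
          rw [Finset.sum_const, Finset.card_range]
          push_cast; ring
  have hexp : |Real.exp (-t)| ≤ t ^ j := by
    rw [abs_of_pos (Real.exp_pos _)]
    calc Real.exp (-t) ≤ 1 := Real.exp_le_one_iff.mpr (by linarith)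
      _ ≤ t ^ j := htj
  calc |Real.exp (-t) - ∑ m ∈ Finset.range (j + 1), (-t) ^ m / (Nat.factorial m)|
      ≤ |Real.exp (-t)| + |∑ m ∈ Finset.range (j + 1), (-t) ^ m / (Nat.factorial m)| :=
        abs_sub _ _
    _ ≤ t ^ j + ((j : ℝ) + 1) * t ^ j := add_le_add hexp hsum
    _ = ((j : ℝ) + 2) * t ^ j := by ring

/-- Integral estimate of the paper's Lemma 2.5: for every `j ∈ ℕ` and `0 < δ < 1` there is
`c > 0` such that for all `λ > 0`,
`∫₀^∞ (e^{−λe^{−r}} − Σ_{m=0}^{j} (−λe^{−r})^m/m!)² e^{2(j+δ)r} dr ≤ c λ^{2(j+δ)}`. -/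
theorem taylor_remainder_weighted_estimate (j : ℕ) (δ : ℝ) (hδ0 : 0 < δ) (hδ1 : δ < 1) :
    ∃ c : ℝ, 0 < c ∧ ∀ lam : ℝ, 0 < lam →
      (∫ r in Set.Ioi (0 : ℝ),
          (Real.exp (-(lam * Real.exp (-r))) -
            ∑ m ∈ Finset.range (j + 1),
              (-(lam * Real.exp (-r))) ^ m / (Nat.factorial m)) ^ 2 *
            Real.exp (2 * ((j : ℝ) + δ) * r))
        ≤ c * lam ^ (2 * ((j : ℝ) + δ)) := by
  set C : ℝ := ((j : ℝ) + 2) ^ 2 with hC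
  have hCpos : 0 < C := by positivity
  refine ⟨C / (2 * (1 - δ)) + C / (2 * δ),
    add_pos (div_pos hCpos (by linarith)) (div_pos hCpos (by linarith)), ?_⟩
  intro lam hlam
  set p : ℝ := 2 * ((j : ℝ) + δ) with hp
  set L : ℝ := Real.log lam with hLdef
  set r0 : ℝ := max L 0 with hr0def
  have hr0nonneg : 0 ≤ r0 := le_max_right _ _
  have hLler0 : L ≤ r0 := le_max_left _ _
  have hexpL : Real.exp L = lam := Real.exp_log hlam
  -- the integrand
  set F : ℝ → ℝ := fun r =>
      (Real.exp (-(lam * Real.exp (-r))) -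
        ∑ m ∈ Finset.range (j + 1),
          (-(lam * Real.exp (-r))) ^ m / (Nat.factorial m)) ^ 2 *
        Real.exp (p * r) with hFdef
  have hc1 : Continuous fun r : ℝ => -(lam * Real.exp (-r)) :=
    (continuous_const.mul (Real.continuous_exp.comp continuous_neg)).neg
  have hFcont : Continuous F := by
    apply Continuous.mul
    · apply Continuous.pow
      apply Continuous.sub
      · exact Real.continuous_exp.comp hc1
      · apply continuous_finset_sum
        intro m _
        exact (hc1.pow m).div_const _
    · exact Real.continuous_exp.comp (continuous_const.mul continuous_id)
  have hFnonneg : ∀ r, 0 ≤ F r := fun r => mul_nonneg (sq_nonneg _) (Real.exp_pos _).le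
  -- dominating functions
  set G1 : ℝ → ℝ := fun r => C * lam ^ (2 * j + 2) * Real.exp (-(2 * (1 - δ) * r)) with hG1
  set G2 : ℝ → ℝ := fun r => C * lam ^ (2 * j) * Real.exp (2 * δ * r) with hG2
  have h2d : (0:ℝ) < 2 * (1 - δ) := by linarith
  have h2δ : (0:ℝ) < 2 * δ := by linarith
  -- pointwise bound on Ioi r0
  have hbound1 : ∀ r ∈ Set.Ioi r0, F r ≤ G1 r := by
    intro r hr
    rw [Set.mem_Ioi] at hr
    set t : ℝ := lam * Real.exp (-r) with ht
    have ht0 : 0 ≤ t := by positivity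
    have ht1 : t ≤ 1 := by
      have : Real.exp (-r) ≤ Real.exp (-L) := by
        apply Real.exp_le_exp.mpr; linarith [hLler0]
      calc t = lam * Real.exp (-r) := rfl
        _ ≤ lam * Real.exp (-L) := by
            exact mul_le_mul_of_nonneg_left this hlam.le
        _ = 1 := by
            rw [Real.exp_neg, hexpL, mul_inv_cancel₀ hlam.ne']
    have hrem := rem_small j ht0 ht1
    have hsq : (Real.exp (-t) - ∑ m ∈ Finset.range (j + 1), (-t) ^ m / (Nat.factorial m)) ^ 2
        ≤ (((j : ℝ) + 2) * t ^ (j + 1)) ^ 2 := by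
      rw [← sq_abs]
      exact pow_le_pow_left₀ (abs_nonneg _) hrem 2
    have heq : (((j : ℝ) + 2) * t ^ (j + 1)) ^ 2 = C * t ^ (2 * j + 2) := by
      rw [hC]; ring
    calc F r = (Real.exp (-t) - ∑ m ∈ Finset.range (j + 1), (-t) ^ m / (Nat.factorial m)) ^ 2
          * Real.exp (p * r) := rfl
      _ ≤ C * t ^ (2 * j + 2) * Real.exp (p * r) := by
          rw [← heq]
          exact mul_le_mul_of_nonneg_right hsq (Real.exp_pos _).le
      _ = G1 r := by
          have e1 : Real.exp (-r) ^ (2 * j + 2) * Real.exp (p * r)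
              = Real.exp (-(2 * (1 - δ) * r)) := by
            rw [← Real.exp_nat_mul, ← Real.exp_add]
            congr 1
            push_cast [hp]
            ring
          calc C * t ^ (2 * j + 2) * Real.exp (p * r)
              = C * lam ^ (2 * j + 2) * (Real.exp (-r) ^ (2 * j + 2) * Real.exp (p * r)) := by
                rw [ht, mul_pow]; ring
            _ = G1 r := by rw [e1]
  -- pointwise bound on Ioc 0 r0
  have hbound2 : ∀ r ∈ Set.Ioc 0 r0, F r ≤ G2 r := by
    intro r hr
    obtain ⟨hr1, hr2⟩ := hr
    have hrL : r ≤ L := by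
      rcases le_or_gt L 0 with h | h
      · exfalso; rw [hr0def, max_eq_right h] at hr2; linarith
      · rwa [hr0def, max_eq_left h.le] at hr2
    set t : ℝ := lam * Real.exp (-r) with ht
    have ht1 : 1 ≤ t := by
      have : Real.exp (-L) ≤ Real.exp (-r) := by
        apply Real.exp_le_exp.mpr; linarith
      calc (1:ℝ) = lam * Real.exp (-L) := by
            rw [Real.exp_neg, hexpL, mul_inv_cancel₀ hlam.ne']
        _ ≤ lam * Real.exp (-r) := mul_le_mul_of_nonneg_left this hlam.le
    have hrem := rem_large j ht1
    have hsq : (Real.exp (-t) - ∑ m ∈ Finset.range (j + 1), (-t) ^ m / (Nat.factorial m)) ^ 2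
        ≤ (((j : ℝ) + 2) * t ^ j) ^ 2 := by
      rw [← sq_abs]
      exact pow_le_pow_left₀ (abs_nonneg _) hrem 2
    have heq : (((j : ℝ) + 2) * t ^ j) ^ 2 = C * t ^ (2 * j) := by
      rw [hC]; ring
    calc F r = (Real.exp (-t) - ∑ m ∈ Finset.range (j + 1), (-t) ^ m / (Nat.factorial m)) ^ 2
          * Real.exp (p * r) := rfl
      _ ≤ C * t ^ (2 * j) * Real.exp (p * r) := by
          rw [← heq]
          exact mul_le_mul_of_nonneg_right hsq (Real.exp_pos _).le
      _ = G2 r := by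
          have e2 : Real.exp (-r) ^ (2 * j) * Real.exp (p * r)
              = Real.exp (2 * δ * r) := by
            rw [← Real.exp_nat_mul, ← Real.exp_add]
            congr 1
            push_cast [hp]
            ring
          calc C * t ^ (2 * j) * Real.exp (p * r)
              = C * lam ^ (2 * j) * (Real.exp (-r) ^ (2 * j) * Real.exp (p * r)) := by
                rw [ht, mul_pow]; ring
            _ = G2 r := by rw [e2]
  -- integrability of G1 on Ioi r0
  have hG1int : IntegrableOn G1 (Set.Ioi r0) := by
    have : IntegrableOn (fun x : ℝ => Real.exp (-(2 * (1 - δ)) * x)) (Set.Ioi r0) :=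
      exp_neg_integrableOn_Ioi r0 h2d
    have h2 := this.const_mul (C * lam ^ (2 * j + 2))
    refine MeasureTheory.IntegrableOn.congr_fun h2 (fun x _ => ?_) measurableSet_Ioi
    simp only [hG1, neg_mul]
  -- integrability of F on Ioi r0
  have hFint1 : IntegrableOn F (Set.Ioi r0) := by
    refine Integrable.mono' hG1int (hFcont.aestronglyMeasurable.restrict) ?_
    rw [ae_restrict_iff' measurableSet_Ioi]
    filter_upwards with r hr
    rw [Real.norm_eq_abs, abs_of_nonneg (hFnonneg r)]
    exact hbound1 r hr
  -- integrability of F, G2 on Ioc 0 r0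
  have hFint2 : IntegrableOn F (Set.Ioc 0 r0) := hFcont.integrableOn_Ioc
  have hG2int : IntegrableOn G2 (Set.Ioc 0 r0) := by
    apply Continuous.integrableOn_Ioc
    exact continuous_const.mul (Real.continuous_exp.comp (continuous_const.mul continuous_id))
  -- split the integral
  have hsplit : ∫ r in Set.Ioi (0:ℝ), F r
      = (∫ r in Set.Ioc 0 r0, F r) + ∫ r in Set.Ioi r0, F r := by
    rw [← Set.Ioc_union_Ioi_eq_Ioi hr0nonneg]
    exact setIntegral_union (Set.Ioc_disjoint_Ioi le_rfl) measurableSet_Ioi hFint2 hFint1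
  -- bound each piece
  have hpiece1 : ∫ r in Set.Ioc 0 r0, F r ≤ C * lam ^ (2 * j) * ((Real.exp (2 * δ * r0) - 1) / (2 * δ)) := by
    have h1 : ∫ r in Set.Ioc 0 r0, F r ≤ ∫ r in Set.Ioc 0 r0, G2 r :=
      setIntegral_mono_on hFint2 hG2int measurableSet_Ioc hbound2
    refine h1.trans_eq ?_
    rw [hG2]
    simp only
    rw [MeasureTheory.integral_const_mul, aux_int_exp_Ioc h2δ hr0nonneg]
  have hpiece2 : ∫ r in Set.Ioi r0, F r ≤ C * lam ^ (2 * j + 2) * (Real.exp (-(2 * (1 - δ) * r0)) / (2 * (1 - δ))) := by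
    have h1 : ∫ r in Set.Ioi r0, F r ≤ ∫ r in Set.Ioi r0, G1 r :=
      setIntegral_mono_on hFint1 hG1int measurableSet_Ioi hbound1
    refine h1.trans_eq ?_
    rw [hG1]
    simp only
    rw [MeasureTheory.integral_const_mul, aux_int_exp_neg_Ioi h2d]
  -- final arithmetic
  have hlamp : lam ^ p = Real.exp (L * p) := Real.rpow_def_of_pos hlam p
  have hlamnat : ∀ n : ℕ, lam ^ n = Real.exp (L * n) := by
    intro n
    rw [← Real.rpow_natCast lam n, Real.rpow_def_of_pos hlam]
  have hfin2 : C * lam ^ (2 * j + 2) * (Real.exp (-(2 * (1 - δ) * r0)) / (2 * (1 - δ)))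
      ≤ C / (2 * (1 - δ)) * lam ^ p := by
    have hkey : lam ^ (2 * j + 2) * Real.exp (-(2 * (1 - δ) * r0)) ≤ lam ^ p := by
      rw [hlamnat, hlamp, ← Real.exp_add]
      apply Real.exp_le_exp.mpr
      push_cast [hp]
      nlinarith [mul_nonneg (by linarith : (0:ℝ) ≤ 1 - δ) (by linarith : (0:ℝ) ≤ r0 - L)]
    calc C * lam ^ (2 * j + 2) * (Real.exp (-(2 * (1 - δ) * r0)) / (2 * (1 - δ)))
        = C / (2 * (1 - δ)) * (lam ^ (2 * j + 2) * Real.exp (-(2 * (1 - δ) * r0))) := by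
          ring
      _ ≤ C / (2 * (1 - δ)) * lam ^ p :=
          mul_le_mul_of_nonneg_left hkey (div_nonneg hCpos.le h2d.le)
  have hfin1 : C * lam ^ (2 * j) * ((Real.exp (2 * δ * r0) - 1) / (2 * δ))
      ≤ C / (2 * δ) * lam ^ p := by
    have hkey : lam ^ (2 * j) * (Real.exp (2 * δ * r0) - 1) ≤ lam ^ p := by
      rw [hlamnat, hlamp]
      rcases le_or_gt L 0 with h | h
      · have hr00 : r0 = 0 := max_eq_right h
        rw [hr00]
        simp only [mul_zero, Real.exp_zero, sub_self]
        exact (Real.exp_pos _).le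
      · have hr0L : r0 = L := max_eq_left h.le
        rw [hr0L]
        calc Real.exp (L * ((2 * j : ℕ) : ℝ)) * (Real.exp (2 * δ * L) - 1)
            ≤ Real.exp (L * ((2 * j : ℕ) : ℝ)) * Real.exp (2 * δ * L) := by
              have h1 := Real.exp_pos (L * ((2 * j : ℕ) : ℝ))
              have h2 := Real.exp_pos (2 * δ * L)
              nlinarith
          _ = Real.exp (L * p) := by
              rw [← Real.exp_add]
              congr 1
              push_cast [hp]
              ring
    calc C * lam ^ (2 * j) * ((Real.exp (2 * δ * r0) - 1) / (2 * δ))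
        = C / (2 * δ) * (lam ^ (2 * j) * (Real.exp (2 * δ * r0) - 1)) := by ring
      _ ≤ C / (2 * δ) * lam ^ p :=
          mul_le_mul_of_nonneg_left hkey (div_nonneg hCpos.le h2δ.le)
  calc ∫ r in Set.Ioi (0:ℝ), F r
      = (∫ r in Set.Ioc 0 r0, F r) + ∫ r in Set.Ioi r0, F r := hsplit
    _ ≤ C * lam ^ (2 * j) * ((Real.exp (2 * δ * r0) - 1) / (2 * δ))
        + C * lam ^ (2 * j + 2) * (Real.exp (-(2 * (1 - δ) * r0)) / (2 * (1 - δ))) :=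
        add_le_add hpiece1 hpiece2
    _ ≤ C / (2 * δ) * lam ^ p + C / (2 * (1 - δ)) * lam ^ p := add_le_add hfin1 hfin2
    _ = (C / (2 * (1 - δ)) + C / (2 * δ)) * lam ^ p := by ring
end

section
/- Let X and Y be complex Hilbert spaces, let D : Y → X be a bounded linear operator with closed range, and let S : X → Y be a bounded linear operator such that S∘D : Y → Y is bijective. Then the map Φ : X → X defined by Φ(x) = x − D((S∘D)⁻¹(S(x))) takes values in ker S, and its restriction to ker D* (the kernel of the Hilbert-space adjoint of D) is a linear bijection from ker D* onto ker S. -/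
/-!
Algebraically, `Φ = id - D (S D)⁻¹ S` is the projection of `X` onto `ker S` along `range D`, so it
restricts to a bijection from any complement of `range D` onto `ker S`. Since `range D` is closed,
its orthogonal complement `ker D*` is such a complement.
-/

open ContinuousLinearMap

section KernelProjection

variable {R X Y : Type*} [Ring R] [AddCommGroup X] [Module R X] [AddCommGroup Y] [Module R Y]
  (D : Y →ₗ[R] X) (S : X →ₗ[R] Y) (h : Function.Bijective (S ∘ₗ D))

noncomputable def kernelProjection : X →ₗ[R] X :=
  LinearMap.id - D ∘ₗ (LinearEquiv.ofBijective (S ∘ₗ D) h).symm.toLinearMap ∘ₗ S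

theorem kernelProjection_apply (x : X) :
    kernelProjection D S h x = x - D ((LinearEquiv.ofBijective (S ∘ₗ D) h).symm (S x)) :=
  rfl

theorem kernelProjection_mem_ker (x : X) : kernelProjection D S h x ∈ LinearMap.ker S := by
  rw [LinearMap.mem_ker, kernelProjection_apply, map_sub, sub_eq_zero]
  exact ((LinearEquiv.ofBijective (S ∘ₗ D) h).apply_symm_apply (S x)).symm

theorem kernelProjection_apply_of_mem_ker {x : X} (hx : x ∈ LinearMap.ker S) :
    kernelProjection D S h x = x := by
  simp_all [kernelProjection_apply]

theorem ker_kernelProjection : LinearMap.ker (kernelProjection D S h) = LinearMap.range D := by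
  ext x
  constructor
  · intro hx
    exact ⟨_, (sub_eq_zero.mp hx).symm⟩
  · rintro ⟨y, rfl⟩
    rw [LinearMap.mem_ker, kernelProjection_apply, sub_eq_zero]
    exact congrArg D ((LinearEquiv.ofBijective (S ∘ₗ D) h).symm_apply_apply y).symm

theorem kernelProjection_bijOn {K : Submodule R X} (hK : IsCompl (LinearMap.range D) K) :
    Set.BijOn (kernelProjection D S h) K (LinearMap.ker S) := by
  refine ⟨fun x _ => kernelProjection_mem_ker D S h x, ?_, ?_⟩
  · exact LinearMap.injOn_of_disjoint_ker le_rfl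
      (ker_kernelProjection D S h ▸ hK.disjoint.symm)
  · intro x hx
    obtain ⟨u, k, hu, hk, rfl⟩ := Submodule.codisjoint_iff_exists_add_eq.mp hK.codisjoint x
    refine ⟨k, hk, ?_⟩
    have hu0 : kernelProjection D S h u = 0 := by
      rwa [← LinearMap.mem_ker, ker_kernelProjection]
    rw [← kernelProjection_apply_of_mem_ker D S h hx, map_add, hu0, zero_add]

end KernelProjection

theorem ContinuousLinearMap.isCompl_range_ker_adjoint {𝕜 E F : Type*} [RCLike 𝕜]
    [NormedAddCommGroup E] [InnerProductSpace 𝕜 E] [CompleteSpace E]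
    [NormedAddCommGroup F] [InnerProductSpace 𝕜 F] [CompleteSpace F]
    (T : E →L[𝕜] F) (hT : IsClosed (Set.range T)) :
    IsCompl (LinearMap.range (T : E →ₗ[𝕜] F)) (LinearMap.ker (adjoint T : F →ₗ[𝕜] E)) := by
  have : CompleteSpace (LinearMap.range (T : E →ₗ[𝕜] F)) := hT.completeSpace_coe
  rw [← orthogonal_range]
  exact Submodule.isCompl_orthogonal _

/-- Functional-analytic core of the paper's Lemma 2.14: if `D : Y → X` is a bounded
operator with closed range between complex Hilbert spaces and `S : X → Y` is bounded with
`S∘D` bijective, then `Φ(x) = x − D((S∘D)⁻¹(S x))` takes values in `ker S` and restricts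
to a (linear) bijection from `ker D*` onto `ker S`. -/
theorem kernel_identification {X Y : Type*}
    [NormedAddCommGroup X] [InnerProductSpace ℂ X] [CompleteSpace X]
    [NormedAddCommGroup Y] [InnerProductSpace ℂ Y] [CompleteSpace Y]
    (D : Y →L[ℂ] X) (S : X →L[ℂ] Y)
    (hD : IsClosed (Set.range D))
    (h : Function.Bijective (S ∘L D)) :
    (∀ x : X,
      x - D ((LinearEquiv.ofBijective (S ∘L D).toLinearMap h).symm (S x))
        ∈ LinearMap.ker (S : X →ₗ[ℂ] Y)) ∧
    Set.BijOn
      (fun x : X => x - D ((LinearEquiv.ofBijective (S ∘L D).toLinearMap h).symm (S x)))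
      (LinearMap.ker (ContinuousLinearMap.adjoint D : X →ₗ[ℂ] Y) : Set X)
      (LinearMap.ker (S : X →ₗ[ℂ] Y) : Set X) :=
  ⟨kernelProjection_mem_ker (D : Y →ₗ[ℂ] X) S h,
    kernelProjection_bijOn (D : Y →ₗ[ℂ] X) S h (D.isCompl_range_ker_adjoint hD)⟩
end

section
/- Let λ ≥ 0, set γ = 2√(4+λ) and δ₊ = 2 + √(4+λ), and let δ ∈ (0, γ) and ε ∈ (0, γ). Let u : [0,∞) → ℝ be twice continuously differentiable, define f(r) = −u″(r) − 4u′(r) + λ·u(r), and assume ∫₀^∞ u(r)² e^{2(δ₊−ε)r} dr < ∞ and ∫₀^∞ f(r)² e^{2(δ₊+δ)r} dr < ∞. Then there exists u_∞ ∈ ℝ such that e^{δ₊r} u(r) → u_∞ as r → ∞, and for every δ′ ∈ (0, δ) one has ∫₀^∞ ( u(r) − u_∞ e^{−δ₊r} )² e^{2(δ₊+δ′)r} dr < ∞. -/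
/-!
Since `(2 + √(4+λ))(2 - √(4+λ)) = -λ`, the operator factors as `-(∂ + δ₋)(∂ + δ₊)` with
`δ₋ = 2 - √(4+λ)`, and each first-order factor is inverted by variation of constants from `+∞`.
For `z = u' + δ₊ u` one has `(e^{δ₋ r} z)' = -e^{δ₋ r} f`; by Cauchy–Schwarz `e^{δ₋ r} f` is
integrable with tails `O(e^{-(δ₊ - δ₋ + δ) r})`, so `z = C e^{-δ₋ r} + O(e^{-(δ₊+δ) r})`.
Integrating `∂ + δ₊` once more gives `u = A e^{-δ₋ r} + u_∞ e^{-δ₊ r} + O(e^{-(δ₊+δ) r})`.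
The growing mode `e^{-δ₋ r}` is not in `e^{-(δ₊-ε) r} L²` because `ε < δ₊ - δ₋`, so `A = 0`, and
the pointwise remainder bound gives the weighted `L²` bound for every `δ' < δ`.
-/

open MeasureTheory Filter Set Real Topology

theorem exp_sq (x : ℝ) : exp x ^ 2 = exp (2 * x) := by
  rw [sq, ← exp_add, two_mul]

theorem hasDerivAt_exp_const_mul (a r : ℝ) :
    HasDerivAt (fun r => exp (a * r)) (exp (a * r) * a) r := by
  simpa using ((hasDerivAt_id r).const_mul a).exp

theorem aestronglyMeasurable_of_hasDerivAt {F F' : ℝ → ℝ} {s : Set ℝ} (hs : MeasurableSet s)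
    (hF : ∀ x ∈ s, HasDerivAt F (F' x) x) : AEStronglyMeasurable F' (volume.restrict s) :=
  (aestronglyMeasurable_deriv F _).congr <|
    (ae_restrict_iff' hs).2 <| ae_of_all _ fun x hx => (hF x hx).deriv

theorem exists_tendsto_abs_sub_le_integral_Ioi {F F' : ℝ → ℝ} {x₀ : ℝ}
    (hF : ∀ x ∈ Ioi x₀, HasDerivAt F (F' x) x) (hF' : IntegrableOn F' (Ioi x₀)) :
    ∃ L, Tendsto F atTop (𝓝 L) ∧ ∀ r ∈ Ioi x₀, |F r - L| ≤ ∫ s in Ioi r, |F' s| := by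
  have hL := tendsto_limUnder_of_hasDerivAt_of_integrableOn_Ioi hF hF'
  refine ⟨_, hL, fun r hr => ?_⟩
  rw [abs_sub_comm, ← integral_Ioi_of_hasDerivAt_of_tendsto'
    (fun x hx => hF x (mem_Ioi.2 (lt_of_lt_of_le hr hx))) (hF'.mono_set (Ioi_subset_Ioi hr.le)) hL]
  exact abs_integral_le_integral_abs

theorem exists_tendsto_exp_mul_of_hasDerivAt {y h : ℝ → ℝ} {a b K x₀ : ℝ}
    (hy : ∀ r ∈ Ioi x₀, HasDerivAt y (h r - a * y r) r)
    (hint : IntegrableOn (fun s => exp (a * s) * h s) (Ioi x₀))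
    (htail : ∀ r ∈ Ioi x₀, ∫ s in Ioi r, |exp (a * s) * h s| ≤ K * exp (-(b - a) * r)) :
    ∃ L, Tendsto (fun r => exp (a * r) * y r) atTop (𝓝 L) ∧
      ∀ r ∈ Ioi x₀, |y r - L * exp (-a * r)| ≤ K * exp (-b * r) := by
  have hF : ∀ r ∈ Ioi x₀, HasDerivAt (fun r => exp (a * r) * y r) (exp (a * r) * h r) r :=
    fun r hr => ((hasDerivAt_exp_const_mul a r).mul (hy r hr)).congr_deriv (by ring)
  obtain ⟨L, hL, hbound⟩ := exists_tendsto_abs_sub_le_integral_Ioi hF hint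
  refine ⟨L, hL, fun r hr => ?_⟩
  have hexp : y r - L * exp (-a * r) = exp (-a * r) * (exp (a * r) * y r - L) := by
    rw [mul_sub, ← mul_assoc, ← exp_add]; simp [mul_comm]
  calc |y r - L * exp (-a * r)| = exp (-a * r) * |exp (a * r) * y r - L| := by
        rw [hexp, abs_mul, abs_exp]
    _ ≤ exp (-a * r) * (K * exp (-(b - a) * r)) := by
        gcongr; exact (hbound r hr).trans (htail r hr)
    _ = K * exp (-b * r) := by rw [mul_left_comm, ← exp_add]; ring_nf

theorem abs_le_mul_sq_mul_exp_add {t : ℝ} (ht : 0 < t) (x c s : ℝ) :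
    |x| ≤ t / 2 * (x ^ 2 * exp (2 * c * s)) + exp (-(2 * c) * s) / (2 * t) := by
  have hE : exp (c * s) * exp (-c * s) = 1 := by rw [← exp_add]; simp
  have h2 : exp (2 * c * s) = exp (c * s) ^ 2 := by rw [exp_sq]; ring_nf
  have h2' : exp (-(2 * c) * s) = exp (-c * s) ^ 2 := by rw [exp_sq]; ring_nf
  rw [h2, h2', ← sq_abs x]
  set E := exp (c * s)
  set E' := exp (-c * s)
  have key : 0 ≤ (t * |x| * E - E') ^ 2 / (2 * t) := by positivity
  have expand : (t * |x| * E - E') ^ 2 / (2 * t) =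
      t / 2 * (|x| ^ 2 * E ^ 2) + E' ^ 2 / (2 * t) - |x| := by
    field_simp
    linear_combination (-2 * t * |x|) * hE
  linarith

theorem integrableOn_of_sq_mul_exp {φ : ℝ → ℝ} {c x₀ : ℝ} (hc : 0 < c)
    (hφ : AEStronglyMeasurable φ (volume.restrict (Ioi x₀)))
    (h : IntegrableOn (fun s => φ s ^ 2 * exp (2 * c * s)) (Ioi x₀)) :
    IntegrableOn φ (Ioi x₀) :=
  ((h.const_mul (1 / 2)).add
    ((exp_neg_integrableOn_Ioi x₀ (by linarith : 0 < 2 * c)).div_const (2 * 1))).mono' hφ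
    (ae_of_all _ fun s => abs_le_mul_sq_mul_exp_add one_pos (φ s) c s)

theorem exists_integral_Ioi_abs_le_of_sq_mul_exp {φ : ℝ → ℝ} {c x₀ : ℝ} (hc : 0 < c)
    (h : IntegrableOn (fun s => φ s ^ 2 * exp (2 * c * s)) (Ioi x₀)) :
    ∃ K, ∀ r ∈ Ici x₀, ∫ s in Ioi r, |φ s| ≤ K * exp (-c * r) := by
  set M := ∫ s in Ioi x₀, φ s ^ 2 * exp (2 * c * s)
  refine ⟨M / 2 + 1 / (4 * c), fun r hr => ?_⟩
  have hφr := h.mono_set (Ioi_subset_Ioi hr)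
  have hexp := exp_neg_integrableOn_Ioi r (by linarith : 0 < 2 * c)
  -- AM-GM with the weight `t` balanced for the tail starting at `r`
  set t := exp (-c * r)
  have ht : 0 < t := exp_pos _
  calc ∫ s in Ioi r, |φ s|
      ≤ ∫ s in Ioi r, (t / 2 * (φ s ^ 2 * exp (2 * c * s)) + exp (-(2 * c) * s) / (2 * t)) :=
        integral_mono_of_nonneg (ae_of_all _ fun _ => abs_nonneg _)
          ((hφr.const_mul _).add (hexp.div_const _))
          (ae_of_all _ fun s => abs_le_mul_sq_mul_exp_add ht _ _ _)
    _ = t / 2 * (∫ s in Ioi r, φ s ^ 2 * exp (2 * c * s)) +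
          (∫ s in Ioi r, exp (-(2 * c) * s)) / (2 * t) := by
        rw [integral_add (hφr.const_mul _) (hexp.div_const _), integral_const_mul, integral_div]
    _ ≤ t / 2 * M + exp (-(2 * c) * r) / (2 * c) / (2 * t) := by
        rw [integral_exp_mul_Ioi (by linarith), neg_div_neg_eq]
        gcongr
        exact setIntegral_mono_set h (ae_of_all _ fun _ => by positivity)
          (Ioi_subset_Ioi hr).eventuallyLE
    _ = (M / 2 + 1 / (4 * c)) * t := by
        rw [show exp (-(2 * c) * r) = t ^ 2 by rw [exp_sq]; ring_nf]
        field_simp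
        ring

theorem integral_Ioi_abs_le_of_abs_le_exp {φ : ℝ → ℝ} {K c x₀ : ℝ} (hc : 0 < c)
    (hφ : ∀ s ∈ Ioi x₀, |φ s| ≤ K * exp (-c * s)) {r : ℝ} (hr : r ∈ Ici x₀) :
    ∫ s in Ioi r, |φ s| ≤ K / c * exp (-c * r) := by
  calc ∫ s in Ioi r, |φ s| ≤ ∫ s in Ioi r, K * exp (-c * s) :=
        integral_mono_of_nonneg (ae_of_all _ fun _ => abs_nonneg _)
          ((exp_neg_integrableOn_Ioi r hc).const_mul K)
          ((ae_restrict_iff' measurableSet_Ioi).2 <|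
            ae_of_all _ fun s hs => hφ s (mem_Ioi.2 (lt_of_le_of_lt hr hs)))
    _ = K / c * exp (-c * r) := by
        rw [integral_const_mul, integral_exp_mul_Ioi (by linarith), neg_div_neg_eq]
        ring

theorem not_integrableOn_Ioi_of_tendsto_atTop {g : ℝ → ℝ} {x₀ : ℝ}
    (hg : Tendsto g atTop atTop) : ¬ IntegrableOn g (Ioi x₀) := by
  intro hint
  obtain ⟨R, hR⟩ := eventually_atTop.1 (hg.eventually_ge_atTop 1)
  have hone : IntegrableOn (fun _ => (1 : ℝ)) (Ioi (max R x₀)) :=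
    (hint.mono_set (Ioi_subset_Ioi (le_max_right _ _))).mono' aestronglyMeasurable_const <|
      (ae_restrict_iff' measurableSet_Ioi).2 <| ae_of_all _ fun s hs => by
        rw [norm_one]; exact hR s ((le_max_left _ _).trans (le_of_lt hs))
  simp [integrableOn_const_iff] at hone

theorem exists_tendsto_exp_mul_of_hasDerivAt_of_sq {y h : ℝ → ℝ} {a b x₀ : ℝ} (hab : a < b)
    (hy : ∀ r ∈ Ioi x₀, HasDerivAt y (h r - a * y r) r)
    (hm : AEStronglyMeasurable h (volume.restrict (Ioi x₀)))
    (h2 : IntegrableOn (fun s => h s ^ 2 * exp (2 * b * s)) (Ioi x₀)) :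
    ∃ L, Tendsto (fun r => exp (a * r) * y r) atTop (𝓝 L) ∧
      ∃ K, ∀ r ∈ Ioi x₀, |y r - L * exp (-a * r)| ≤ K * exp (-b * r) := by
  have hφ : IntegrableOn (fun s => (exp (a * s) * h s) ^ 2 * exp (2 * (b - a) * s)) (Ioi x₀) := by
    refine h2.congr_fun (fun s _ => ?_) measurableSet_Ioi
    rw [mul_pow, exp_sq, mul_right_comm, ← exp_add]
    ring_nf
  have hφm : AEStronglyMeasurable (fun s => exp (a * s) * h s) (volume.restrict (Ioi x₀)) :=
    (by fun_prop : Continuous fun s => exp (a * s)).aestronglyMeasurable.mul hm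
  obtain ⟨K, htail⟩ := exists_integral_Ioi_abs_le_of_sq_mul_exp (sub_pos.2 hab) hφ
  obtain ⟨L, hL, hbound⟩ := exists_tendsto_exp_mul_of_hasDerivAt hy
    (integrableOn_of_sq_mul_exp (sub_pos.2 hab) hφm hφ)
    (fun r hr => htail r (Ioi_subset_Ici_self hr))
  exact ⟨L, hL, K, hbound⟩

theorem exists_tendsto_exp_mul_of_hasDerivAt_of_abs_le {y h : ℝ → ℝ} {a b K x₀ : ℝ}
    (hab : a < b) (hy : ∀ r ∈ Ioi x₀, HasDerivAt y (h r - a * y r) r)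
    (hm : AEStronglyMeasurable h (volume.restrict (Ioi x₀)))
    (hh : ∀ s ∈ Ioi x₀, |h s| ≤ K * exp (-b * s)) :
    ∃ L, Tendsto (fun r => exp (a * r) * y r) atTop (𝓝 L) ∧
      ∀ r ∈ Ioi x₀, |y r - L * exp (-a * r)| ≤ K / (b - a) * exp (-b * r) := by
  have hφ : ∀ s ∈ Ioi x₀, |exp (a * s) * h s| ≤ K * exp (-(b - a) * s) := fun s hs =>
    calc |exp (a * s) * h s| = exp (a * s) * |h s| := by rw [abs_mul, abs_exp]
      _ ≤ exp (a * s) * (K * exp (-b * s)) := by gcongr; exact hh s hs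
      _ = K * exp (-(b - a) * s) := by rw [mul_left_comm, ← exp_add]; ring_nf
  have hint : IntegrableOn (fun s => exp (a * s) * h s) (Ioi x₀) :=
    ((exp_neg_integrableOn_Ioi x₀ (sub_pos.2 hab)).const_mul K).mono'
      ((by fun_prop : Continuous fun s => exp (a * s)).aestronglyMeasurable.mul hm)
      ((ae_restrict_iff' measurableSet_Ioi).2 <| ae_of_all _ hφ)
  exact exists_tendsto_exp_mul_of_hasDerivAt hy hint fun r hr =>
    integral_Ioi_abs_le_of_abs_le_exp (sub_pos.2 hab) hφ (Ioi_subset_Ici_self hr)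

theorem eq_zero_of_tendsto_exp_mul_sub_mul_exp {u : ℝ → ℝ} {A L α β ε x₀ : ℝ}
    (hε : 0 < ε) (hεαβ : ε < β - α)
    (hL : Tendsto (fun r => exp (β * r) * (u r - A * exp (-α * r))) atTop (𝓝 L))
    (hu : IntegrableOn (fun r => u r ^ 2 * exp (2 * (β - ε) * r)) (Ioi x₀)) : A = 0 := by
  by_contra hA
  set w := fun r => exp (-ε * r) * (exp (β * r) * (u r - A * exp (-α * r)))
  have hw : Tendsto w atTop (𝓝 0) := by
    simpa only [w, zero_mul, Function.comp_def, id] using (tendsto_exp_atBot.comp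
      (tendsto_id.const_mul_atTop_of_neg (neg_lt_zero.2 hε))).mul hL
  have hgrowth : Tendsto (fun r => |A| * exp ((β - α - ε) * r)) atTop atTop :=
    (tendsto_exp_atTop.comp (tendsto_id.const_mul_atTop (by linarith))).const_mul_atTop
      (abs_pos.2 hA)
  have hsplit : ∀ r, u r * exp ((β - ε) * r) = w r + A * exp ((β - α - ε) * r) := fun r => by
    have e₁ : exp (-ε * r) * exp (β * r) = exp ((β - ε) * r) := by rw [← exp_add]; ring_nf
    have e₂ : exp ((β - ε) * r) * exp (-α * r) = exp ((β - α - ε) * r) := by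
      rw [← exp_add]; ring_nf
    linear_combination (-(u r - A * exp (-α * r))) * e₁ + A * e₂
  have habs : Tendsto (fun r => |u r * exp ((β - ε) * r)|) atTop atTop := by
    refine tendsto_atTop_mono (fun r => ?_) (hgrowth.atTop_add hw.abs.neg)
    have := abs_sub (u r * exp ((β - ε) * r)) (w r)
    rw [hsplit, add_sub_cancel_left, abs_mul, abs_exp] at this
    simp only [hsplit]
    linarith
  refine not_integrableOn_Ioi_of_tendsto_atTop ?_ hu
  refine ((tendsto_pow_atTop two_ne_zero).comp habs).congr fun r => ?_
  rw [Function.comp_apply, sq_abs, mul_pow, exp_sq]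
  ring_nf

theorem integrableOn_sq_mul_exp_of_abs_le_exp {φ : ℝ → ℝ} {K b c x₀ : ℝ} (hcb : c < b)
    (hm : AEStronglyMeasurable φ (volume.restrict (Ioi x₀)))
    (hφ : ∀ r ∈ Ioi x₀, |φ r| ≤ K * exp (-b * r)) :
    IntegrableOn (fun r => φ r ^ 2 * exp (2 * c * r)) (Ioi x₀) := by
  refine ((exp_neg_integrableOn_Ioi x₀ (by linarith : 0 < 2 * (b - c))).const_mul (K ^ 2)).mono'
    ((hm.pow 2).mul (by fun_prop : Continuous fun r => exp (2 * c * r)).aestronglyMeasurable)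
    ((ae_restrict_iff' measurableSet_Ioi).2 <| ae_of_all _ fun r hr => ?_)
  rw [norm_of_nonneg (by positivity)]
  obtain ⟨hlow, hup⟩ := abs_le.1 (hφ r hr)
  calc φ r ^ 2 * exp (2 * c * r) ≤ (K * exp (-b * r)) ^ 2 * exp (2 * c * r) :=
        mul_le_mul_of_nonneg_right (sq_le_sq' hlow hup) (exp_pos _).le
    _ = K ^ 2 * exp (-(2 * (b - c)) * r) := by
        rw [mul_pow, exp_sq, mul_assoc, ← exp_add]; ring_nf

theorem exists_two_term_expansion_of_sq_mul_exp {u u' u'' : ℝ → ℝ} {α β δ x₀ : ℝ}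
    (hαβ : α < β) (hδ : 0 < δ)
    (hu' : ∀ r ∈ Ioi x₀, HasDerivAt u (u' r) r) (hu'' : ∀ r ∈ Ioi x₀, HasDerivAt u' (u'' r) r)
    (hf : IntegrableOn (fun r => (u'' r + (α + β) * u' r + α * β * u r) ^ 2 *
      exp (2 * (β + δ) * r)) (Ioi x₀)) :
    ∃ A L, Tendsto (fun r => exp (β * r) * (u r - A * exp (-α * r))) atTop (𝓝 L) ∧
      ∃ K, ∀ r ∈ Ioi x₀, |u r - A * exp (-α * r) - L * exp (-β * r)| ≤
        K * exp (-(β + δ) * r) := by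
  have hu_cont : ContinuousOn u (Ioi x₀) := fun r hr =>
    (hu' r hr).continuousAt.continuousWithinAt
  have hu'_cont : ContinuousOn u' (Ioi x₀) := fun r hr =>
    (hu'' r hr).continuousAt.continuousWithinAt
  have hz : ∀ r ∈ Ioi x₀, HasDerivAt (fun r => u' r + β * u r)
      ((u'' r + (α + β) * u' r + α * β * u r) - α * (u' r + β * u r)) r := fun r hr =>
    ((hu'' r hr).add ((hu' r hr).const_mul β)).congr_deriv (by ring)
  have hf_meas : AEStronglyMeasurable (fun r => u'' r + (α + β) * u' r + α * β * u r)
      (volume.restrict (Ioi x₀)) :=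
    ((aestronglyMeasurable_of_hasDerivAt measurableSet_Ioi hu'').add
      ((hu'_cont.aestronglyMeasurable measurableSet_Ioi).const_mul _)).add
      ((hu_cont.aestronglyMeasurable measurableSet_Ioi).const_mul _)
  obtain ⟨C, -, K, hC⟩ :=
    exists_tendsto_exp_mul_of_hasDerivAt_of_sq (by linarith) hz hf_meas hf
  set A := C / (β - α)
  have hũ : ∀ r ∈ Ioi x₀, HasDerivAt (fun r => u r - A * exp (-α * r))
      ((u' r + β * u r - C * exp (-α * r)) - β * (u r - A * exp (-α * r))) r := by
    intro r hr
    refine ((hu' r hr).sub ((hasDerivAt_exp_const_mul (-α) r).const_mul A)).congr_deriv ?_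
    simp only [A]
    field_simp [(sub_pos.2 hαβ).ne']
    ring
  have hz_meas : AEStronglyMeasurable (fun r => u' r + β * u r - C * exp (-α * r))
      (volume.restrict (Ioi x₀)) :=
    ((hu'_cont.add (hu_cont.const_smul β)).sub (by fun_prop)).aestronglyMeasurable
      measurableSet_Ioi
  obtain ⟨L, hL, hbound⟩ :=
    exists_tendsto_exp_mul_of_hasDerivAt_of_abs_le (by linarith) hũ hz_meas hC
  exact ⟨A, L, hL, _, hbound⟩

theorem indicial_boundary_value_general (lam : ℝ) (δ ε : ℝ)
    (hδ : δ ∈ Set.Ioo (0 : ℝ) (2 * Real.sqrt (4 + lam)))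
    (hε : ε ∈ Set.Ioo (0 : ℝ) (2 * Real.sqrt (4 + lam)))
    (u u' u'' : ℝ → ℝ)
    (hu' : ∀ r ∈ Set.Ici (0 : ℝ), HasDerivAt u (u' r) r)
    (hu'' : ∀ r ∈ Set.Ici (0 : ℝ), HasDerivAt u' (u'' r) r)
    (huL2 : IntegrableOn
      (fun r => u r ^ 2 * Real.exp (2 * ((2 + Real.sqrt (4 + lam)) - ε) * r))
      (Set.Ioi (0 : ℝ)))
    (hfL2 : IntegrableOn
      (fun r => (-u'' r - 4 * u' r + lam * u r) ^ 2 *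
        Real.exp (2 * ((2 + Real.sqrt (4 + lam)) + δ) * r))
      (Set.Ioi (0 : ℝ))) :
    ∃ uinf : ℝ,
      Tendsto (fun r => Real.exp ((2 + Real.sqrt (4 + lam)) * r) * u r) atTop (nhds uinf) ∧
      ∀ δ' ∈ Set.Ioo (0 : ℝ) δ,
        IntegrableOn
          (fun r => (u r - uinf * Real.exp (-(2 + Real.sqrt (4 + lam)) * r)) ^ 2 *
            Real.exp (2 * ((2 + Real.sqrt (4 + lam)) + δ') * r))
          (Set.Ioi (0 : ℝ)) := by
  obtain ⟨hδ₀, hδμ⟩ := hδ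
  obtain ⟨hε₀, hεμ⟩ := hε
  set μ := √(4 + lam)
  have hμsq : μ ^ 2 = 4 + lam := sq_sqrt (sqrt_pos.1 (by linarith)).le
  have hf : IntegrableOn (fun r =>
      (u'' r + ((2 - μ) + (2 + μ)) * u' r + (2 - μ) * (2 + μ) * u r) ^ 2 *
        exp (2 * ((2 + μ) + δ) * r)) (Ioi 0) := by
    have hroots : ∀ r, u'' r + ((2 - μ) + (2 + μ)) * u' r + (2 - μ) * (2 + μ) * u r =
        -(-u'' r - 4 * u' r + lam * u r) := fun r => by linear_combination (-u r) * hμsq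
    simpa only [hroots, neg_sq] using hfL2
  obtain ⟨A, L, hL, K, hK⟩ := exists_two_term_expansion_of_sq_mul_exp (by linarith) hδ₀
    (fun r hr => hu' r (Ioi_subset_Ici_self hr)) (fun r hr => hu'' r (Ioi_subset_Ici_self hr)) hf
  obtain rfl : A = 0 := eq_zero_of_tendsto_exp_mul_sub_mul_exp hε₀ (by linarith) hL huL2
  simp only [zero_mul, sub_zero] at hL hK
  refine ⟨L, hL, fun δ' hδ' => integrableOn_sq_mul_exp_of_abs_le_exp
    (b := (2 + μ) + δ) (by linarith [hδ'.2]) ?_ hK⟩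
  exact (ContinuousOn.sub (fun r hr => (hu' r (le_of_lt hr)).continuousAt.continuousWithinAt)
    (by fun_prop)).aestronglyMeasurable measurableSet_Ioi

/-- Scalar ODE lemma underlying the paper's regularity Theorem 2.6: let `λ ≥ 0`,
`δ₊ = 2 + √(4+λ)`, `γ = 2√(4+λ)`, and `δ, ε ∈ (0, γ)`. If `u` is `C²` on `[0,∞)` with
`u ∈ L²` for the weight `e^{2(δ₊−ε)r}` and `f = −u″ − 4u′ + λu ∈ L²` for the weight
`e^{2(δ₊+δ)r}`, then `e^{δ₊ r} u(r)` converges to some `u_∞`, and for every `δ′ < δ` the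
difference `u − u_∞ e^{−δ₊ r}` is `L²` for the weight `e^{2(δ₊+δ′)r}`. -/
theorem indicial_boundary_value (lam : ℝ) (hlam : 0 ≤ lam) (δ ε : ℝ)
    (hδ : δ ∈ Set.Ioo (0 : ℝ) (2 * Real.sqrt (4 + lam)))
    (hε : ε ∈ Set.Ioo (0 : ℝ) (2 * Real.sqrt (4 + lam)))
    (u u' u'' : ℝ → ℝ)
    (hu' : ∀ r ∈ Set.Ici (0 : ℝ), HasDerivAt u (u' r) r)
    (hu'' : ∀ r ∈ Set.Ici (0 : ℝ), HasDerivAt u' (u'' r) r)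
    (hcont : ContinuousOn u'' (Set.Ici (0 : ℝ)))
    (huL2 : IntegrableOn
      (fun r => u r ^ 2 * Real.exp (2 * ((2 + Real.sqrt (4 + lam)) - ε) * r))
      (Set.Ioi (0 : ℝ)))
    (hfL2 : IntegrableOn
      (fun r => (-u'' r - 4 * u' r + lam * u r) ^ 2 *
        Real.exp (2 * ((2 + Real.sqrt (4 + lam)) + δ) * r))
      (Set.Ioi (0 : ℝ))) :
    ∃ uinf : ℝ,
      Tendsto (fun r => Real.exp ((2 + Real.sqrt (4 + lam)) * r) * u r) atTop (nhds uinf) ∧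
      ∀ δ' ∈ Set.Ioo (0 : ℝ) δ,
        IntegrableOn
          (fun r => (u r - uinf * Real.exp (-(2 + Real.sqrt (4 + lam)) * r)) ^ 2 *
            Real.exp (2 * ((2 + Real.sqrt (4 + lam)) + δ') * r))
          (Set.Ioi (0 : ℝ)) :=
  indicial_boundary_value_general lam δ ε hδ hε u u' u'' hu' hu'' huL2 hfL2
end
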